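/- Let $D_1\subset D_2\subset\mathbb{R}^n$ be open bounded connected Lipschitz domains, and suppose there are constants $K_1,K_2>0$ such that for every $\mathbf{U}\in H^1(D_2,\mathbb{R}^n)$ there exist skew-symmetric matrices $A_1,A_2\in\mathbb{R}^{n\times n}$ with $\|\nabla\mathbf{U}-A_1\|_{L^2(D_1)}\le K_1\|e(\mathbf{U})\|_{L^2(D_1)}$ and $\|\nabla\mathbf{U}-A_2\|_{L^2(D_2)}\le K_2\|e(\mathbf{U})\|_{L^2(D_2)}$. Then there exists a constant $C>0$ depending only on $K_1,K_2$ and the ratio $|D_2|/|D_1|$, such that for every $\mathbf{U}\in H^1(D_2,\mathbb{R}^n)$, $\|\nabla\mathbf{U}\|_{L^2(D_2)} \le C\big(\|\nabla\mathbf{U}\|_{L^2(D_1)} + \|e(\mathbf{U})\|_{L^2(D_2)}\big)$. -/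

import Mathlib

open MeasureTheory Matrix

/-- The gradient matrix of a vector field `U : ℝⁿ → ℝⁿ`. -/
noncomputable def gradMat (n : ℕ) (U : EuclideanSpace ℝ (Fin n) → EuclideanSpace ℝ (Fin n))
    (x : EuclideanSpace ℝ (Fin n)) : Matrix (Fin n) (Fin n) ℝ :=
  fun i j => fderiv ℝ (fun y => U y i) x (EuclideanSpace.single j (1 : ℝ))

/-- Squared Frobenius norm of a matrix. -/
def matSq {n : ℕ} (M : Matrix (Fin n) (Fin n) ℝ) : ℝ := ∑ i, ∑ j, (M i j) ^ 2

/-- Symmetric part of a matrix (the symmetrized gradient when applied to `gradMat`). -/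
noncomputable def symP {n : ℕ} (M : Matrix (Fin n) (Fin n) ℝ) : Matrix (Fin n) (Fin n) ℝ :=
  (1 / 2 : ℝ) • (M + Mᵀ)

/-! Let `A` be the skew matrix given by Korn's inequality on `D₂`, and write `‖·‖_D` for the
`L²(D)` norm. The triangle inequality against the constant `A` gives
`‖∇U‖_{D₂} ≤ ‖∇U - A‖_{D₂} + |A| |D₂|^{1/2}` and `|A| |D₁|^{1/2} ≤ ‖∇U - A‖_{D₁} + ‖∇U‖_{D₁}`.
Eliminating `|A|` and using `‖∇U - A‖_{D₁} ≤ ‖∇U - A‖_{D₂} ≤ K₂ ‖e(U)‖_{D₂}` yields the claim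
with `C = (1 + ρ)(K₂ + 1)`, `ρ = (|D₂| / |D₁|)^{1/2}`. -/

open scoped ENNReal

attribute [local instance] Matrix.frobeniusNormedAddCommGroup

section

variable {α : Type*} {m : MeasurableSpace α}

section LpNorm

variable {E : Type*} [NormedAddCommGroup E] {p : ℝ≥0∞}

theorem lpNorm_mono_measure {μ ν : Measure α} {f : α → E} (hμν : μ ≤ ν) (hf : MemLp f p ν) :
    lpNorm f p μ ≤ lpNorm f p ν := by
  rw [← toReal_eLpNorm (hf.mono_measure hμν).aestronglyMeasurable,
    ← toReal_eLpNorm hf.aestronglyMeasurable]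
  exact ENNReal.toReal_mono hf.eLpNorm_ne_top (eLpNorm_mono_measure f hμν)

theorem lpNorm_restrict_le_of_subset {μ : Measure α} {s t : Set α} (hp : 1 ≤ p) (hst : s ⊆ t)
    (hs : μ s ≠ 0) (ht : μ t ≠ ∞) (f : α → E) (a : E) :
    lpNorm f p (μ.restrict t) ≤
      (1 + (μ.real t / μ.real s) ^ p.toReal⁻¹) * lpNorm (f - fun _ => a) p (μ.restrict t) +
        (μ.real t / μ.real s) ^ p.toReal⁻¹ * lpNorm f p (μ.restrict s) := by
  set ρ := (μ.real t / μ.real s) ^ p.toReal⁻¹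
  have hρ : 0 ≤ ρ := by positivity
  by_cases hf : MemLp f p (μ.restrict t)
  swap
  · rw [lpNorm_of_not_memLp hf]
    exact add_nonneg (mul_nonneg (by positivity) lpNorm_nonneg) (mul_nonneg hρ lpNorm_nonneg)
  have hp0 : p ≠ 0 := (zero_lt_one.trans_le hp).ne'
  have hμs : 0 < μ.real s := ENNReal.toReal_pos hs (ne_top_of_le_ne_top ht (measure_mono hst))
  have hμst : μ.restrict s ≤ μ.restrict t := Measure.restrict_mono hst le_rfl
  have hconst : ∀ u, μ u ≠ 0 →
      lpNorm (fun _ => a) p (μ.restrict u) = ‖a‖ * μ.real u ^ p.toReal⁻¹ := fun u hu => by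
    rw [lpNorm_const hp0 (mt Measure.restrict_eq_zero.1 hu)]
    simp
  have hvol : μ.real t ^ p.toReal⁻¹ = ρ * μ.real s ^ p.toReal⁻¹ := by
    rw [← Real.mul_rpow (by positivity) hμs.le, div_mul_cancel₀ _ hμs.ne']
  have := isFiniteMeasure_restrict.2 ht
  have ha : MemLp (fun _ => a) p (μ.restrict t) := memLp_const a
  have hbound_t := lpNorm_le_lpNorm_add_lpNorm_sub' ha hp (f := f)
  have hbound_s := lpNorm_le_lpNorm_add_lpNorm_sub (hf.mono_measure hμst) hp (f := fun _ => a)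
  rw [hconst t (fun h => hs (measure_mono_null hst h)), hvol] at hbound_t
  rw [hconst s hs] at hbound_s
  have hsub_t := lpNorm_mono_measure hμst (hf.sub ha)
  calc lpNorm f p (μ.restrict t)
      ≤ ρ * (‖a‖ * μ.real s ^ p.toReal⁻¹) + lpNorm (f - fun _ => a) p (μ.restrict t) := by
        linarith
    _ ≤ ρ * (lpNorm f p (μ.restrict s) + lpNorm (f - fun _ => a) p (μ.restrict t)) +
          lpNorm (f - fun _ => a) p (μ.restrict t) := by
        gcongr
        linarith
    _ = _ := by ring

end LpNorm

theorem frobenius_norm_sq_eq_matSq {n : ℕ} (M : Matrix (Fin n) (Fin n) ℝ) :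
    ‖M‖ ^ 2 = matSq M := by
  rw [Matrix.frobenius_norm_def, ← Real.sqrt_eq_rpow, Real.sq_sqrt (by positivity)]
  simp [matSq, Real.norm_eq_abs, sq_abs]

theorem sqrt_integral_matSq_eq_lpNorm {μ : Measure α} {n : ℕ}
    {F : α → Matrix (Fin n) (Fin n) ℝ} (hF : AEStronglyMeasurable F μ) :
    Real.sqrt (∫ x, matSq (F x) ∂μ) = lpNorm F 2 μ := by
  rw [lpNorm_eq_integral_norm_rpow_toReal two_ne_zero ENNReal.ofNat_ne_top hF]
  simp [← frobenius_norm_sq_eq_matSq, Real.sqrt_eq_rpow]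

end

theorem aestronglyMeasurable_gradMat (n : ℕ)
    (U : EuclideanSpace ℝ (Fin n) → EuclideanSpace ℝ (Fin n))
    {μ : Measure (EuclideanSpace ℝ (Fin n))} : AEStronglyMeasurable (gradMat n U) μ := by
  have : Measurable fun x => fun i j => gradMat n U x i j :=
    measurable_pi_lambda _ fun i => measurable_pi_lambda _ fun j =>
      measurable_fderiv_apply_const ℝ _ _
  exact this.aestronglyMeasurable

theorem korn_propagation_general (n : ℕ)
    (D1 D2 : Set (EuclideanSpace ℝ (Fin n)))
    (hsub : D1 ⊆ D2)
    (hLip1 : (volume D1).toReal ≠ 0) (hLip2 : (volume D2).toReal ≠ 0)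
    (K1 K2 : ℝ) (hK2 : 0 < K2)
    (korn : ∀ U : EuclideanSpace ℝ (Fin n) → EuclideanSpace ℝ (Fin n),
      ContDiffOn ℝ 1 U D2 → IntegrableOn (fun x => matSq (gradMat n U x)) D2 →
      ∃ A1 A2 : Matrix (Fin n) (Fin n) ℝ, A1ᵀ = -A1 ∧ A2ᵀ = -A2 ∧
        Real.sqrt (∫ x in D1, matSq (gradMat n U x - A1)) ≤
          K1 * Real.sqrt (∫ x in D1, matSq (symP (gradMat n U x))) ∧
        Real.sqrt (∫ x in D2, matSq (gradMat n U x - A2)) ≤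
          K2 * Real.sqrt (∫ x in D2, matSq (symP (gradMat n U x)))) :
    ∃ C > 0, ∀ U : EuclideanSpace ℝ (Fin n) → EuclideanSpace ℝ (Fin n),
      ContDiffOn ℝ 1 U D2 → IntegrableOn (fun x => matSq (gradMat n U x)) D2 →
      Real.sqrt (∫ x in D2, matSq (gradMat n U x)) ≤
        C * (Real.sqrt (∫ x in D1, matSq (gradMat n U x))
             + Real.sqrt (∫ x in D2, matSq (symP (gradMat n U x)))) := by
  set ρ := (volume.real D2 / volume.real D1) ^ (2 : ℝ≥0∞).toReal⁻¹
  have hρ : 0 ≤ ρ := by positivity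
  refine ⟨(1 + ρ) * (K2 + 1), by positivity, fun U hU hInt => ?_⟩
  obtain ⟨-, A, -, -, -, hA⟩ := korn U hU hInt
  have hW : Real.sqrt (∫ x in D2, matSq (gradMat n U x - A)) =
      lpNorm (gradMat n U - fun _ => A) 2 (volume.restrict D2) :=
    sqrt_integral_matSq_eq_lpNorm ((aestronglyMeasurable_gradMat n U).sub aestronglyMeasurable_const)
  rw [hW] at hA
  rw [sqrt_integral_matSq_eq_lpNorm (aestronglyMeasurable_gradMat n U),
    sqrt_integral_matSq_eq_lpNorm (aestronglyMeasurable_gradMat n U)]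
  have hprop := lpNorm_restrict_le_of_subset one_le_two hsub
    (ENNReal.toReal_ne_zero.1 hLip1).1 (ENNReal.toReal_ne_zero.1 hLip2).2 (gradMat n U) A
  set E := Real.sqrt (∫ x in D2, matSq (symP (gradMat n U x)))
  have hE : 0 ≤ E := Real.sqrt_nonneg _
  have hg1 : 0 ≤ lpNorm (gradMat n U) 2 (volume.restrict D1) := lpNorm_nonneg
  calc lpNorm (gradMat n U) 2 (volume.restrict D2)
      ≤ (1 + ρ) * (K2 * E) + ρ * lpNorm (gradMat n U) 2 (volume.restrict D1) :=
        hprop.trans (by gcongr)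
    _ ≤ (1 + ρ) * (K2 + 1) * (lpNorm (gradMat n U) 2 (volume.restrict D1) + E) := by
        nlinarith [mul_nonneg (mul_nonneg (by positivity : (0 : ℝ) ≤ 1 + ρ) hK2.le) hg1,
          mul_nonneg hρ hE]

/-- Propagation of Korn's first inequality from a subdomain to the whole domain
(Lemma 5.2 of the paper): if Korn's first inequality holds on `D₁ ⊆ D₂` with constants
`K₁, K₂`, then `‖∇U‖_{L²(D₂)} ≤ C(‖∇U‖_{L²(D₁)} + ‖e(U)‖_{L²(D₂)})` for every
`U ∈ H¹(D₂, ℝⁿ)`. -/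
theorem korn_propagation (n : ℕ)
    (D1 D2 : Set (EuclideanSpace ℝ (Fin n)))
    (hsub : D1 ⊆ D2) (hO1 : IsOpen D1) (hO2 : IsOpen D2)
    (hB : Bornology.IsBounded D2) (hc1 : IsConnected D1) (hc2 : IsConnected D2)
    (hLip1 : (volume D1).toReal ≠ 0) (hLip2 : (volume D2).toReal ≠ 0)
    (K1 K2 : ℝ) (hK1 : 0 < K1) (hK2 : 0 < K2)
    (korn : ∀ U : EuclideanSpace ℝ (Fin n) → EuclideanSpace ℝ (Fin n),
      ContDiffOn ℝ 1 U D2 → IntegrableOn (fun x => matSq (gradMat n U x)) D2 →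
      ∃ A1 A2 : Matrix (Fin n) (Fin n) ℝ, A1ᵀ = -A1 ∧ A2ᵀ = -A2 ∧
        Real.sqrt (∫ x in D1, matSq (gradMat n U x - A1)) ≤
          K1 * Real.sqrt (∫ x in D1, matSq (symP (gradMat n U x))) ∧
        Real.sqrt (∫ x in D2, matSq (gradMat n U x - A2)) ≤
          K2 * Real.sqrt (∫ x in D2, matSq (symP (gradMat n U x)))) :
    ∃ C > 0, ∀ U : EuclideanSpace ℝ (Fin n) → EuclideanSpace ℝ (Fin n),
      ContDiffOn ℝ 1 U D2 → IntegrableOn (fun x => matSq (gradMat n U x)) D2 →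
      Real.sqrt (∫ x in D2, matSq (gradMat n U x)) ≤
        C * (Real.sqrt (∫ x in D1, matSq (gradMat n U x))
             + Real.sqrt (∫ x in D2, matSq (symP (gradMat n U x)))) :=
  korn_propagation_general n D1 D2 hsub hLip1 hLip2 K1 K2 hK2 korn
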